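/- The function Q̃(u) = u·e^{−u²/2} / ∫₀^u e^{−t²/2} dt is strictly decreasing on (0,∞), with lim_{u→0⁺} Q̃(u) = 1 and lim_{u→∞} Q̃(u) = 0. -/

import Mathlib

open Real Set Filter

/-- The function Q̃ of the paper. -/
noncomputable def Qtilde : ℝ → ℝ :=
  fun u => u * Real.exp (-u ^ 2 / 2) / ∫ t in (0:ℝ)..u, Real.exp (-t ^ 2 / 2)

/-!
Write `Q̃ = N / G` with `N u = u e^{-u²/2}` and `G u = ∫₀^u e^{-t²/2} dt`. Since `N' = (1 - u²) G'`,
the sign of `Q̃'` is that of `(1 - u²) G - N`; this function vanishes at `0` and has derivative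
`-2uG < 0`, so `Q̃` decreases. At `0⁺`, `G u / u → G' 0 = 1` while `e^{-u²/2} → 1`; at infinity,
`G ≥ G 1 > 0` while `N → 0`.
-/

open Topology

theorem tendsto_intervalIntegral_div_nhdsGT_zero {f : ℝ → ℝ} (hf : Continuous f) :
    Tendsto (fun u => (∫ t in (0:ℝ)..u, f t) / u) (𝓝[>] 0) (𝓝 (f 0)) := by
  have h := hasDerivAt_iff_tendsto_slope.mp (hf.integral_hasStrictDerivAt 0 0).hasDerivAt
  refine (h.mono_left (nhdsWithin_mono 0 fun u hu => ne_of_gt hu)).congr fun u => ?_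
  simp [slope_def_field]

noncomputable def gaussIntegral (u : ℝ) : ℝ := ∫ t in (0:ℝ)..u, exp (-t ^ 2 / 2)

theorem continuous_exp_neg_sq_div_two : Continuous fun t : ℝ => exp (-t ^ 2 / 2) := by
  fun_prop

theorem hasDerivAt_gaussIntegral (x : ℝ) : HasDerivAt gaussIntegral (exp (-x ^ 2 / 2)) x :=
  (continuous_exp_neg_sq_div_two.integral_hasStrictDerivAt 0 x).hasDerivAt

theorem gaussIntegral_zero : gaussIntegral 0 = 0 := intervalIntegral.integral_same

theorem gaussIntegral_strictMono : StrictMono gaussIntegral :=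
  strictMono_of_deriv_pos fun x => by rw [(hasDerivAt_gaussIntegral x).deriv]; exact exp_pos _

theorem gaussIntegral_pos {x : ℝ} (hx : 0 < x) : 0 < gaussIntegral x := by
  simpa [gaussIntegral_zero] using gaussIntegral_strictMono hx

theorem hasDerivAt_mul_exp_neg_sq_div_two (x : ℝ) :
    HasDerivAt (fun u => u * exp (-u ^ 2 / 2)) ((1 - x ^ 2) * exp (-x ^ 2 / 2)) x :=
  ((hasDerivAt_id' x).fun_mul (((hasDerivAt_pow 2 x).fun_neg.div_const 2).exp)).congr_deriv
    (by ring)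

theorem one_sub_sq_mul_gaussIntegral_lt {x : ℝ} (hx : 0 < x) :
    (1 - x ^ 2) * gaussIntegral x < x * exp (-x ^ 2 / 2) := by
  let g u := u * exp (-u ^ 2 / 2) - (1 - u ^ 2) * gaussIntegral u
  have hg (u : ℝ) : HasDerivAt g (2 * u * gaussIntegral u) u :=
    ((hasDerivAt_mul_exp_neg_sq_div_two u).fun_sub
      (((hasDerivAt_pow 2 u).const_sub 1).fun_mul (hasDerivAt_gaussIntegral u))).congr_deriv
      (by ring)
  have g_strictMonoOn : StrictMonoOn g (Ici 0) := by
    refine strictMonoOn_of_deriv_pos (convex_Ici 0)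
      (fun u _ => (hg u).continuousAt.continuousWithinAt) fun u hu => ?_
    rw [interior_Ici] at hu
    rw [(hg u).deriv]
    exact mul_pos (mul_pos two_pos hu) (gaussIntegral_pos hu)
  have := g_strictMonoOn self_mem_Ici hx.le hx
  simpa [g, gaussIntegral_zero] using this

theorem Qtilde_eq_div_gaussIntegral (u : ℝ) :
    Qtilde u = u * exp (-u ^ 2 / 2) / gaussIntegral u :=
  rfl

theorem hasDerivAt_Qtilde {x : ℝ} (hx : 0 < x) :
    HasDerivAt Qtilde (((1 - x ^ 2) * exp (-x ^ 2 / 2) * gaussIntegral x -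
      x * exp (-x ^ 2 / 2) * exp (-x ^ 2 / 2)) / gaussIntegral x ^ 2) x :=
  (hasDerivAt_mul_exp_neg_sq_div_two x).div (hasDerivAt_gaussIntegral x) (gaussIntegral_pos hx).ne'

theorem Qtilde_strictAntiOn : StrictAntiOn Qtilde (Ioi 0) := by
  refine strictAntiOn_of_deriv_neg (convex_Ioi 0)
    (fun x hx => (hasDerivAt_Qtilde hx).continuousAt.continuousWithinAt) fun x hx => ?_
  rw [interior_Ioi] at hx
  rw [(hasDerivAt_Qtilde hx).deriv]
  refine div_neg_of_neg_of_pos ?_ (pow_pos (gaussIntegral_pos hx) 2)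
  have h := mul_lt_mul_of_pos_right (one_sub_sq_mul_gaussIntegral_lt hx) (exp_pos (-x ^ 2 / 2))
  linarith

theorem tendsto_Qtilde_nhdsGT_zero : Tendsto Qtilde (𝓝[>] 0) (𝓝 1) := by
  have hG : Tendsto (fun u => gaussIntegral u / u) (𝓝[>] 0) (𝓝 (exp (-0 ^ 2 / 2))) :=
    tendsto_intervalIntegral_div_nhdsGT_zero continuous_exp_neg_sq_div_two
  norm_num at hG
  have hexp : Tendsto (fun u : ℝ => exp (-u ^ 2 / 2)) (𝓝[>] 0) (𝓝 1) := by
    simpa using (continuous_exp_neg_sq_div_two.tendsto 0).mono_left nhdsWithin_le_nhds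
  refine (div_one (1 : ℝ) ▸ hexp.div hG one_ne_zero).congr' ?_
  filter_upwards [self_mem_nhdsWithin] with u hu
  rw [Qtilde_eq_div_gaussIntegral, Pi.div_apply, div_div_eq_mul_div, mul_comm]

theorem tendsto_mul_exp_neg_sq_div_two_atTop :
    Tendsto (fun u => u * exp (-u ^ 2 / 2)) atTop (𝓝 0) := by
  refine ((tendsto_rpow_abs_mul_exp_neg_mul_sq_cocompact one_half_pos 1).mono_left
    atTop_le_cocompact).congr' ?_
  filter_upwards [eventually_ge_atTop 0] with u hu
  rw [abs_of_nonneg hu, rpow_one]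
  ring_nf

theorem tendsto_Qtilde_atTop : Tendsto Qtilde atTop (𝓝 0) := by
  have hbound : Tendsto (fun u => u * exp (-u ^ 2 / 2) / gaussIntegral 1) atTop (𝓝 0) := by
    simpa using tendsto_mul_exp_neg_sq_div_two_atTop.div_const (gaussIntegral 1)
  refine tendsto_of_tendsto_of_tendsto_of_le_of_le' tendsto_const_nhds hbound ?_ ?_ <;>
    filter_upwards [eventually_ge_atTop 1] with u hu
  · exact div_nonneg (by positivity) (gaussIntegral_pos (by linarith)).le
  · exact div_le_div_of_nonneg_left (by positivity) (gaussIntegral_pos one_pos)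
      (gaussIntegral_strictMono.monotone hu)

/-- Q̃ is strictly decreasing on (0,∞), tends to 1 at 0⁺ and to 0 at ∞. -/
theorem Qtilde_properties :
    StrictAntiOn Qtilde (Ioi (0:ℝ)) ∧
      Tendsto Qtilde (nhdsWithin 0 (Ioi 0)) (nhds 1) ∧
      Tendsto Qtilde atTop (nhds 0) :=
  ⟨Qtilde_strictAntiOn, tendsto_Qtilde_nhdsGT_zero, tendsto_Qtilde_atTop⟩
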